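/- arXiv:1501.05278 — 2 statements merged into one kernel-verified Lean document; each statement's English description precedes it below -/
import Mathlib

section
/- For a pure birth process with birth rates p_n > 0 for all n, the minimal solution of the Kolmogorov forward equations is a probability distribution for all t (i.e., the process is non-explosive) if and only if the series ∑_n 1/p_n diverges. -/
open MeasureTheory ProbabilityTheory Set Real
open scoped ENNReal NNReal

private lemma one_add_sum_le_prod_aux (x : ℕ → ℝ) (hx : ∀ i, 0 ≤ x i) (N : ℕ) :
    1 + ∑ i ∈ Finset.range N, x i ≤ ∏ i ∈ Finset.range N, (1 + x i) := by
  induction N with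
  | zero => simp
  | succ n ih =>
    rw [Finset.sum_range_succ, Finset.prod_range_succ]
    have h1 : (0:ℝ) ≤ ∑ i ∈ Finset.range n, x i := Finset.sum_nonneg fun i _ => hx i
    have h2 : (1:ℝ) ≤ ∏ i ∈ Finset.range n, (1 + x i) := by
      calc (1:ℝ) = ∏ i ∈ Finset.range n, 1 := by simp
        _ ≤ ∏ i ∈ Finset.range n, (1 + x i) :=
          Finset.prod_le_prod (fun i _ => zero_le_one) (fun i _ => by linarith [hx i])
    nlinarith [hx n]

/-- Pure birth process with birth rates `p n > 0`: modelling the sojourn time in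
state `n` as an exponential random variable `T n` of rate `p n`, the chain is
non-explosive (i.e. the total time `∑ T n` spent before escaping to infinity is
a.s. infinite, so the Kolmogorov forward equations have a probability
distribution as minimal solution for all `t`) if and only if `∑ 1/p n = ∞`. -/
theorem pure_birth_nonexplosive_iff {Ω : Type*} [MeasurableSpace Ω]
    (μ : Measure Ω) [IsProbabilityMeasure μ]
    (p : ℕ → ℝ) (hp : ∀ n, 0 < p n)
    (T : ℕ → Ω → ℝ) (hmeas : ∀ n, Measurable (T n))
    (hpos : ∀ n, ∀ ω, 0 < T n ω)
    (hindep : iIndepFun T μ)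
    (hexp : ∀ n, ∀ t : ℝ, 0 ≤ t →
      μ {ω | t < T n ω} = ENNReal.ofReal (Real.exp (-(p n) * t))) :
    (∀ᵐ ω ∂μ, (∑' n, ENNReal.ofReal (T n ω)) = ⊤)
      ↔ (∑' n, ENNReal.ofReal (1 / p n)) = ⊤ := by
  constructor
  · -- non-explosion implies divergence
    intro h
    have h1 : ∫⁻ ω, (∑' n, ENNReal.ofReal (T n ω)) ∂μ = ⊤ := by
      calc ∫⁻ ω, (∑' n, ENNReal.ofReal (T n ω)) ∂μ
          = ∫⁻ (_ : Ω), (⊤ : ℝ≥0∞) ∂μ := lintegral_congr_ae (h.mono fun ω hω => hω)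
        _ = ⊤ := by simp
    rw [lintegral_tsum (fun n => ((hmeas n).ennreal_ofReal).aemeasurable)] at h1
    have h2 : ∀ n, ∫⁻ ω, ENNReal.ofReal (T n ω) ∂μ = ENNReal.ofReal (1 / p n) := by
      intro n
      rw [lintegral_eq_lintegral_meas_lt μ
        (Filter.Eventually.of_forall fun ω => (hpos n ω).le) (hmeas n).aemeasurable]
      rw [setLIntegral_congr_fun measurableSet_Ioi
        (fun t (ht : t ∈ Ioi (0:ℝ)) => hexp n t (le_of_lt ht))]
      rw [← ofReal_integral_eq_lintegral_ofReal (exp_neg_integrableOn_Ioi 0 (hp n))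
        (Filter.Eventually.of_forall fun t => (Real.exp_pos _).le)]
      congr 1
      have h0 := integral_comp_mul_left_Ioi (fun y => Real.exp (-y)) 0 (hp n)
      simp only [mul_zero, integral_exp_neg_Ioi_zero, smul_eq_mul, mul_one, neg_mul] at h0 ⊢
      rw [h0, one_div]
    rwa [tsum_congr h2] at h1
  · -- divergence implies non-explosion
    intro hdiv
    set g : ℕ → Ω → ℝ≥0∞ := fun n ω => ENNReal.ofReal (Real.exp (-(T n ω))) with hg
    have hgmeas : ∀ n, Measurable (g n) :=
      fun n => ((measurable_exp.comp measurable_neg).comp (hmeas n)).ennreal_ofReal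
    have hgindep : iIndepFun g μ :=
      hindep.comp (fun _ x => ENNReal.ofReal (Real.exp (-x)))
        (fun _ => (measurable_exp.comp measurable_neg).ennreal_ofReal)
    have hFmeas : ∀ N, Measurable fun ω => ∏ n ∈ Finset.range N, g n ω :=
      fun N => Finset.measurable_prod _ fun i _ => hgmeas i
    -- product formula from independence
    have hprod : ∀ N, ∫⁻ ω, ∏ n ∈ Finset.range N, g n ω ∂μ
        = ∏ n ∈ Finset.range N, ∫⁻ ω, g n ω ∂μ := by
      intro N
      induction N with
      | zero => simp
      | succ m ih =>
        have hind : IndepFun (fun ω => ∏ n ∈ Finset.range m, g n ω) (g m) μ := by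
          have := hgindep.indepFun_prod_range_succ hgmeas m
          have heq : (∏ j ∈ Finset.range m, g j) = fun ω => ∏ j ∈ Finset.range m, g j ω := by
            funext ω; exact Finset.prod_apply ω _ _
          rwa [heq] at this
        simp_rw [Finset.prod_range_succ]
        rw [lintegral_mul_eq_lintegral_mul_lintegral_of_indepFun'' (hFmeas m).aemeasurable
          (hgmeas m).aemeasurable hind, ih]
    -- individual bound
    have hB : ∀ n, ∫⁻ ω, g n ω ∂μ ≤ ENNReal.ofReal (p n / (p n + 1)) := by
      intro n
      rw [show (∫⁻ ω, g n ω ∂μ)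
          = ∫⁻ ω, ENNReal.ofReal (Real.exp (-(T n ω))) ∂μ from rfl]
      rw [lintegral_eq_lintegral_meas_lt μ
        (Filter.Eventually.of_forall fun ω => (Real.exp_pos _).le)
        (((measurable_exp.comp measurable_neg).comp (hmeas n)).aemeasurable)]
      have hsplit : Ioo (0:ℝ) 1 ∪ Ici 1 = Ioi 0 := Ioo_union_Ici_eq_Ioi zero_lt_one
      rw [← hsplit, lintegral_union measurableSet_Ici (by
        rw [Set.disjoint_left]
        intro t ht h1
        exact absurd (mem_Ici.mp h1) (not_le.mpr ht.2))]
      have hright : ∫⁻ t in Ici (1:ℝ), μ {a | t < Real.exp (-(T n a))} = 0 := by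
        rw [setLIntegral_congr_fun measurableSet_Ici
          (fun t (ht : t ∈ Ici (1:ℝ)) => ?_), lintegral_zero]
        have : {a | t < Real.exp (-(T n a))} = ∅ := by
          ext a
          simp only [mem_setOf_eq, mem_empty_iff_false, iff_false, not_lt]
          have h1 : Real.exp (-(T n a)) < 1 := by
            rw [← Real.exp_zero]
            exact Real.exp_lt_exp.mpr (by linarith [hpos n a])
          linarith [mem_Ici.mp ht]
        rw [this, measure_empty]
      rw [hright, add_zero]
      have hmono : ∀ t ∈ Ioo (0:ℝ) 1,
          μ {a | t < Real.exp (-(T n a))} ≤ ENNReal.ofReal (1 - t ^ p n) := by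
        intro t ht
        have hlog : 0 ≤ -Real.log t := by linarith [Real.log_neg ht.1 ht.2]
        have hsub : {a | t < Real.exp (-(T n a))} ⊆ {a | -Real.log t < T n a}ᶜ := by
          intro a ha
          simp only [mem_compl_iff, mem_setOf_eq, not_lt]
          have h1 : Real.log t < -(T n a) := by
            have := Real.log_lt_log ht.1 ha
            rwa [Real.log_exp] at this
          linarith
        have hms : MeasurableSet {a | -Real.log t < T n a} :=
          measurableSet_lt measurable_const (hmeas n)
        calc μ {a | t < Real.exp (-(T n a))}
            ≤ μ ({a | -Real.log t < T n a}ᶜ) := measure_mono hsub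
          _ = 1 - μ {a | -Real.log t < T n a} := prob_compl_eq_one_sub hms
          _ = 1 - ENNReal.ofReal (Real.exp (-(p n) * (-Real.log t))) := by
              rw [hexp n _ hlog]
          _ = ENNReal.ofReal (1 - t ^ p n) := by
              have hexp_eq : Real.exp (-(p n) * (-Real.log t)) = t ^ p n := by
                rw [Real.rpow_def_of_pos ht.1]
                congr 1; ring
              rw [hexp_eq, ENNReal.ofReal_sub 1 (Real.rpow_nonneg ht.1.le _),
                ENNReal.ofReal_one]
      have hmeasb : Measurable fun t : ℝ => ENNReal.ofReal (1 - t ^ p n) :=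
        (measurable_const.sub (measurable_id.pow_const _)).ennreal_ofReal
      calc ∫⁻ t in Ioo (0:ℝ) 1, μ {a | t < Real.exp (-(T n a))}
          ≤ ∫⁻ t in Ioo (0:ℝ) 1, ENNReal.ofReal (1 - t ^ p n) :=
            setLIntegral_mono hmeasb hmono
        _ = ENNReal.ofReal (∫ t in Ioo (0:ℝ) 1, (1 - t ^ p n)) := by
            have hIcc : IntervalIntegrable (fun t : ℝ => 1 - t ^ p n) volume 0 1 :=
              intervalIntegrable_const.sub (intervalIntegral.intervalIntegrable_rpow' (by linarith [hp n]))
            have hint : IntegrableOn (fun t : ℝ => 1 - t ^ p n) (Ioo 0 1) volume :=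
              ((intervalIntegrable_iff_integrableOn_Ioc_of_le zero_le_one).mp hIcc).mono_set
                Ioo_subset_Ioc_self
            have hnn : 0 ≤ᵐ[volume.restrict (Ioo (0:ℝ) 1)] fun t : ℝ => 1 - t ^ p n := by
              filter_upwards [ae_restrict_mem measurableSet_Ioo] with t ht
              have := Real.rpow_le_one ht.1.le ht.2.le (hp n).le
              simp only [Pi.zero_apply]
              linarith
            exact (ofReal_integral_eq_lintegral_ofReal hint hnn).symm
        _ ≤ ENNReal.ofReal (p n / (p n + 1)) := by
            apply ENNReal.ofReal_le_ofReal
            have hval : (∫ t in Ioo (0:ℝ) 1, (1 - t ^ p n)) = 1 - 1 / (p n + 1) := by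
              rw [← integral_Ioc_eq_integral_Ioo,
                ← intervalIntegral.integral_of_le zero_le_one,
                intervalIntegral.integral_sub intervalIntegrable_const
                  (intervalIntegral.intervalIntegrable_rpow' (by linarith [hp n])),
                integral_rpow (Or.inl (by linarith [hp n]))]
              rw [Real.one_rpow, Real.zero_rpow (ne_of_gt (by linarith [hp n]))]
              simp
            rw [hval]
            have hpn := hp n
            have : 1 - 1 / (p n + 1) = p n / (p n + 1) := by field_simp; ring
            rw [this]
    -- the infimum of the partial products
    set h : Ω → ℝ≥0∞ := fun ω => ⨅ N : ℕ, ∏ n ∈ Finset.range N, g n ω with hh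
    have hhmeas : Measurable h := Measurable.iInf hFmeas
    have hzero : ∫⁻ ω, h ω ∂μ = 0 := by
      refine le_antisymm ?_ zero_le
      refine ENNReal.le_of_forall_pos_le_add fun ε hε _ => ?_
      rw [zero_add]
      have hεpos : (0:ℝ) < (ε:ℝ) := hε
      -- choose N with large partial sum
      obtain ⟨N, hN⟩ : ∃ N, 1 / (ε:ℝ) ≤ ∑ n ∈ Finset.range N, 1 / p n := by
        by_contra hcon
        push_neg at hcon
        have hbound : (∑' n, ENNReal.ofReal (1 / p n)) ≤ ENNReal.ofReal (1 / (ε:ℝ)) := by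
          rw [ENNReal.tsum_eq_iSup_sum]
          refine iSup_le fun s => ?_
          obtain ⟨N, hsN⟩ := s.exists_nat_subset_range
          calc ∑ n ∈ s, ENNReal.ofReal (1 / p n)
              ≤ ∑ n ∈ Finset.range N, ENNReal.ofReal (1 / p n) :=
                Finset.sum_le_sum_of_subset hsN
            _ = ENNReal.ofReal (∑ n ∈ Finset.range N, 1 / p n) :=
                (ENNReal.ofReal_sum_of_nonneg fun i _ => one_div_nonneg.mpr (hp i).le).symm
            _ ≤ ENNReal.ofReal (1 / (ε:ℝ)) := ENNReal.ofReal_le_ofReal (hcon N).le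
        rw [hdiv] at hbound
        exact (ENNReal.ofReal_lt_top.trans_le hbound).ne rfl
      have hS0 : (0:ℝ) ≤ ∑ n ∈ Finset.range N, 1 / p n :=
        Finset.sum_nonneg fun i _ => one_div_nonneg.mpr (hp i).le
      calc ∫⁻ ω, h ω ∂μ
          ≤ ∫⁻ ω, ∏ n ∈ Finset.range N, g n ω ∂μ := lintegral_mono fun ω => iInf_le _ N
        _ = ∏ n ∈ Finset.range N, ∫⁻ ω, g n ω ∂μ := hprod N
        _ ≤ ∏ n ∈ Finset.range N, ENNReal.ofReal (p n / (p n + 1)) :=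
            Finset.prod_le_prod' fun i _ => hB i
        _ = ENNReal.ofReal (∏ n ∈ Finset.range N, p n / (p n + 1)) :=
            (ENNReal.ofReal_prod_of_nonneg fun i _ =>
              div_nonneg (hp i).le (by linarith [hp i])).symm
        _ ≤ ENNReal.ofReal (1 / (1 + ∑ n ∈ Finset.range N, 1 / p n)) := by
            apply ENNReal.ofReal_le_ofReal
            have hfac : ∀ i ∈ Finset.range N, p i / (p i + 1) = (1 + 1 / p i)⁻¹ := by
              intro i _
              have h0 := hp i
              rw [eq_comm, inv_eq_iff_eq_inv, eq_comm]
              field_simp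
            rw [Finset.prod_congr rfl hfac, Finset.prod_inv_distrib, one_div]
            refine inv_anti₀ (by linarith) ?_
            exact one_add_sum_le_prod_aux _ (fun i => one_div_nonneg.mpr (hp i).le) N
        _ ≤ (ε : ℝ≥0∞) := by
            have h1 : 1 / (ε:ℝ) ≤ 1 + ∑ n ∈ Finset.range N, 1 / p n := by linarith
            have h2 : 1 / (1 + ∑ n ∈ Finset.range N, 1 / p n) ≤ (ε:ℝ) := by
              have h3 := mul_le_mul_of_nonneg_left h1 hεpos.le
              rw [mul_one_div, div_self hεpos.ne'] at h3
              rw [div_le_iff₀ (by linarith)]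
              linarith
            calc ENNReal.ofReal (1 / (1 + ∑ n ∈ Finset.range N, 1 / p n))
                ≤ ENNReal.ofReal (ε:ℝ) := ENNReal.ofReal_le_ofReal h2
              _ = (ε : ℝ≥0∞) := ENNReal.ofReal_coe_nnreal
    -- conclude a.e.
    have hae : h =ᵐ[μ] 0 := (lintegral_eq_zero_iff hhmeas).mp hzero
    filter_upwards [hae] with ω hω
    by_contra hne
    set C := (∑' n, ENNReal.ofReal (T n ω)).toReal with hC
    have hpart : ∀ N, ∑ n ∈ Finset.range N, T n ω ≤ C := by
      intro N
      have h1 : ENNReal.ofReal (∑ n ∈ Finset.range N, T n ω)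
          = ∑ n ∈ Finset.range N, ENNReal.ofReal (T n ω) :=
        ENNReal.ofReal_sum_of_nonneg fun i _ => (hpos i ω).le
      have h2 : (∑ n ∈ Finset.range N, ENNReal.ofReal (T n ω))
          ≤ ∑' n, ENNReal.ofReal (T n ω) := ENNReal.sum_le_tsum _
      have h3 := ENNReal.toReal_mono hne (h1 ▸ h2)
      rwa [ENNReal.toReal_ofReal (Finset.sum_nonneg fun i _ => (hpos i ω).le)] at h3
    have hlb : ENNReal.ofReal (Real.exp (-C)) ≤ h ω := by
      refine le_iInf fun N => ?_
      have hFeq : (∏ n ∈ Finset.range N, g n ω)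
          = ENNReal.ofReal (Real.exp (-(∑ n ∈ Finset.range N, T n ω))) := by
        simp only [hg]
        rw [← ENNReal.ofReal_prod_of_nonneg (fun i _ => (Real.exp_pos _).le)]
        congr 1
        rw [← Real.exp_sum]
        congr 1
        exact Finset.sum_neg_distrib _
      rw [hFeq]
      exact ENNReal.ofReal_le_ofReal (Real.exp_le_exp.mpr (by linarith [hpart N]))
    simp only [Pi.zero_apply] at hω
    rw [hω, nonpos_iff_eq_zero, ENNReal.ofReal_eq_zero] at hlb
    linarith [Real.exp_pos (-C)]
end

section
/- Haldane's load can exceed the total number of less-fit individuals ever alive: there exist parameters 0 < k < 1 and q₀ ∈ (0,1) with ∑_{n=0}^∞ k q_n > q₀, where q_n = q₀(1-k)^n/(p₀ + q₀(1-k)^n); in fact this holds for all such parameters. -/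
/-- Haldane's load exceeds the total number of less-fit individuals ever alive:
for all `0 < k < 1` and `q₀ ∈ (0,1)` (with `p₀ = 1 - q₀`),
`∑_{n≥0} k q_n > q₀` where `q_n = q₀ (1-k)^n / (p₀ + q₀ (1-k)^n)`. -/
theorem haldane_load_exceeds_loss (k q₀ : ℝ) (hk0 : 0 < k) (hk1 : k < 1)
    (hq0 : 0 < q₀) (hq1 : q₀ < 1) :
    q₀ < ∑' n : ℕ, k * (q₀ * (1 - k) ^ n / ((1 - q₀) + q₀ * (1 - k) ^ n)) := by
  have hr0 : 0 < 1 - k := by linarith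
  have hp0 : 0 < 1 - q₀ := by linarith
  set f : ℕ → ℝ := fun n => k * q₀ * (1 - k) ^ n with hf
  set g : ℕ → ℝ := fun n => k * (q₀ * (1 - k) ^ n / ((1 - q₀) + q₀ * (1 - k) ^ n)) with hg
  have hden : ∀ n : ℕ, 0 < (1 - q₀) + q₀ * (1 - k) ^ n := by
    intro n; have : 0 < q₀ * (1 - k) ^ n := by positivity
    linarith
  have hden1 : ∀ n : ℕ, (1 - q₀) + q₀ * (1 - k) ^ n ≤ 1 := by
    intro n
    have hle : (1 - k) ^ n ≤ 1 := pow_le_one₀ (le_of_lt hr0) (by linarith)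
    nlinarith
  have hfg : ∀ n : ℕ, f n ≤ g n := by
    intro n
    have h1 : q₀ * (1 - k) ^ n ≤ q₀ * (1 - k) ^ n / ((1 - q₀) + q₀ * (1 - k) ^ n) := by
      rw [le_div_iff₀ (hden n)]
      have : 0 ≤ q₀ * (1 - k) ^ n := by positivity
      nlinarith [hden1 n]
    have : k * (q₀ * (1 - k) ^ n) ≤ g n := by
      exact mul_le_mul_of_nonneg_left h1 hk0.le
    simpa [hf, mul_assoc] using this
  have hstrict : f 1 < g 1 := by
    have hd1 : (1 - q₀) + q₀ * (1 - k) ^ 1 < 1 := by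
      have : q₀ * (1 - k) ^ 1 = q₀ - q₀ * k := by ring
      nlinarith
    have h1 : q₀ * (1 - k) ^ 1 < q₀ * (1 - k) ^ 1 / ((1 - q₀) + q₀ * (1 - k) ^ 1) := by
      rw [lt_div_iff₀ (hden 1)]
      have hpos : 0 < q₀ * (1 - k) ^ 1 := by positivity
      nlinarith
    have := mul_lt_mul_of_pos_left h1 hk0
    simpa [hf, hg, mul_assoc] using this
  have hgsum : Summable g := by
    apply Summable.of_nonneg_of_le
    · intro n
      have := hden n
      positivity
    · intro n
      show g n ≤ (k * q₀ / (1 - q₀)) * (1 - k) ^ n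
      have hdge : 1 - q₀ ≤ (1 - q₀) + q₀ * (1 - k) ^ n := by
        have : 0 ≤ q₀ * (1 - k) ^ n := by positivity
        linarith
      have h1 : q₀ * (1 - k) ^ n / ((1 - q₀) + q₀ * (1 - k) ^ n) ≤
          q₀ * (1 - k) ^ n / (1 - q₀) := by
        apply div_le_div_of_nonneg_left (by positivity) hp0 hdge
      calc g n ≤ k * (q₀ * (1 - k) ^ n / (1 - q₀)) :=
              mul_le_mul_of_nonneg_left h1 hk0.le
        _ = (k * q₀ / (1 - q₀)) * (1 - k) ^ n := by ring
    · exact Summable.mul_left _ (summable_geometric_of_lt_one hr0.le (by linarith))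
  have hfsum : ∑' n, f n = q₀ := by
    rw [hf]
    rw [tsum_mul_left, tsum_geometric_of_lt_one hr0.le (by linarith)]
    field_simp
    rw [sub_sub_cancel]
    exact div_self hk0.ne'
  calc q₀ = ∑' n, f n := hfsum.symm
    _ < ∑' n, g n := Summable.tsum_lt_tsum hfg hstrict (Summable.mul_left _ (summable_geometric_of_lt_one (by linarith) (by linarith))) hgsum
end
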